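/- Suppose the small-set assumption and the one-step drift condition (D) hold, and π is an invariant probability measure for P. Then the constant n₀ := E_ν τ_1²/E_ν τ_1 − 1 of the split chain satisfies n₀ ≤ 2·[ λ·(π(V) − 1)/(1 − λ) + (K − λ)/(β·(1 − λ)) − 1 ]. -/

import Mathlib

/-!
Let `R = P - β 1_J ⊗ ν` be the residual kernel, so that `P_ν(τ₁ > n) = (ν Rⁿ)(𝒳)`; hence
`E τ₁ = ∑ₙ (ν Rⁿ)(𝒳)` and `E τ₁² = ∑ₙ (2n + 1) (ν Rⁿ)(𝒳)`. The drift condition makes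
`g = λ (V - 1) / (1 - λ) + (K - λ) / (β (1 - λ)) - 1` satisfy `R (1 + g) ≤ g`, which telescopes to
`∑_{n > k} (ν Rⁿ)(𝒳) ≤ (ν Rᵏ)(g)`, so `∑ₙ n (ν Rⁿ)(𝒳) ≤ ∑ₖ (ν Rᵏ)(g)`. Iterating the invariance
`π = π R + β π(J) ν` bounds `β π(J) ∑ₖ (ν Rᵏ)(g)` by `π(g)`, and gives Kac's formula
`β π(J) E τ₁ = 1`, the remainder `(π Rᴺ)(𝒳)` vanishing because `∑ₙ (π Rⁿ⁺¹)(𝒳) ≤ π(g) < ∞`.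
Therefore `n₀ = 2 ∑ₙ n (ν Rⁿ)(𝒳) / E τ₁ ≤ 2 π(g)`.
-/

open MeasureTheory ProbabilityTheory Set ENNReal

/-- The σ-algebra generated by `X 0, …, X n` and `G 0, …, G (n-1)`
(the past of the split chain just before the regeneration indicator `G n` is drawn). -/
def pastBeforeG {Ω 𝒳 : Type*} [MeasurableSpace 𝒳] (X : ℕ → Ω → 𝒳) (G : ℕ → Ω → Bool)
    (n : ℕ) : MeasurableSpace Ω :=
  (⨆ i ∈ Set.Iic n, MeasurableSpace.comap (X i) inferInstance) ⊔
    (⨆ i ∈ Set.Iio n, MeasurableSpace.comap (G i) inferInstance)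

/-- The σ-algebra generated by `X 0, …, X n` and `G 0, …, G n`. -/
def pastXG {Ω 𝒳 : Type*} [MeasurableSpace 𝒳] (X : ℕ → Ω → 𝒳) (G : ℕ → Ω → Bool)
    (n : ℕ) : MeasurableSpace Ω :=
  (⨆ i ∈ Set.Iic n, MeasurableSpace.comap (X i) inferInstance) ⊔
    (⨆ i ∈ Set.Iic n, MeasurableSpace.comap (G i) inferInstance)

/-- The normalized residualKer kernel `Q(x,·) = (P(x,·) − β·1_J(x)·ν(·)) / (1 − β·1_J(x))`. -/
noncomputable def residualKer {𝒳 : Type*} [MeasurableSpace 𝒳] (P : Kernel 𝒳 𝒳) (J : Set 𝒳)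
    (β : ℝ) (ν : Measure 𝒳) (x : 𝒳) (A : Set 𝒳) : ℝ≥0∞ :=
  (P x A - ENNReal.ofReal β * J.indicator (fun _ => (1 : ℝ≥0∞)) x * ν A) /
    (1 - ENNReal.ofReal β * J.indicator (fun _ => (1 : ℝ≥0∞)) x)

/-- `(X, G)` is a version of the split chain of Nummelin/Athreya–Ney associated to the
kernel `P`, small set `J`, minorization constant `β` and minorizing measure `ν`:
given the past up to `X n`, the regeneration indicator `G n` equals `true` with probability
`β·1_J(X n)`; given the past up to `(X n, G n)`, the next state `X (n+1)` is distributed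
according to `ν` if `G n = true` and according to the residualKer kernel `Q(X n, ·)` otherwise.
Moreover (the chain being assumed π-irreducible and recurrent in the paper) regenerations
occur infinitely often almost surely. -/
structure IsSplitChain {Ω 𝒳 : Type*} [MeasurableSpace Ω] [MeasurableSpace 𝒳] (μ : Measure Ω)
    (P : Kernel 𝒳 𝒳) (J : Set 𝒳) (β : ℝ) (ν : Measure 𝒳)
    (X : ℕ → Ω → 𝒳) (G : ℕ → Ω → Bool) : Prop where
  measX : ∀ n, Measurable (X n)
  measG : ∀ n, Measurable (G n)
  condG : ∀ n, ∀ B : Set Ω, MeasurableSet[pastBeforeG X G n] B →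
    μ (B ∩ {ω | G n ω = true}) =
      ∫⁻ ω in B, ENNReal.ofReal β * J.indicator (fun _ => (1 : ℝ≥0∞)) (X n ω) ∂μ
  condX : ∀ n, ∀ A : Set 𝒳, MeasurableSet A → ∀ B : Set Ω, MeasurableSet[pastXG X G n] B →
    μ (B ∩ (X (n+1)) ⁻¹' A) =
      ∫⁻ ω in B, (if G n ω = true then ν A else residualKer P J β ν (X n ω) A) ∂μ
  recur : ∀ᵐ ω ∂μ, ∀ m : ℕ, ∃ n : ℕ, m < n ∧ G (n - 1) ω = true

/-- The regeneration epochs: `T 0 = 0` and `T k = min{n > T (k-1) : G (n-1) = true}`. -/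
noncomputable def regTime {Ω : Type*} (G : ℕ → Ω → Bool) : ℕ → Ω → ℕ
  | 0 => fun _ => 0
  | (k + 1) => fun ω => sInf {n : ℕ | regTime G k ω < n ∧ G (n - 1) ω = true}

/-- `R(n) = min{r ≥ 1 : T r ≥ n}`, the number of the first regeneration epoch `≥ n`. -/
noncomputable def hitNum {Ω : Type*} (G : ℕ → Ω → Bool) (n : ℕ) (ω : Ω) : ℕ :=
  sInf {r : ℕ | 1 ≤ r ∧ n ≤ regTime G r ω}

/-- The first block sum `Ξ₁(f) = ∑_{i=0}^{T 1 − 1} f (X i)`. -/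
noncomputable def blockSum1 {Ω 𝒳 : Type*} (f : 𝒳 → ℝ) (X : ℕ → Ω → 𝒳) (G : ℕ → Ω → Bool)
    (ω : Ω) : ℝ :=
  ∑ i ∈ Finset.range (regTime G 1 ω), f (X i ω)

/-- The regenerative-sequential estimator
`θ̂_{T_{R(n)}} = (1 / T_{R(n)}) ∑_{i=0}^{T_{R(n)} − 1} f (X i)`. -/
noncomputable def regEstimator {Ω 𝒳 : Type*} (f : 𝒳 → ℝ) (X : ℕ → Ω → 𝒳) (G : ℕ → Ω → Bool)
    (n : ℕ) (ω : Ω) : ℝ :=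
  (regTime G (hitNum G n ω) ω : ℝ)⁻¹ *
    ∑ i ∈ Finset.range (regTime G (hitNum G n ω) ω), f (X i ω)

namespace ENNReal

lemma tsum_succ_le_of_add_le {y z : ℕ → ℝ≥0∞} (h : ∀ n, y (n + 1) + z (n + 1) ≤ z n) :
    ∑' n, y (n + 1) ≤ z 0 := by
  have partial_le : ∀ N, ∑ n ∈ Finset.range N, y (n + 1) + z N ≤ z 0 := by
    intro N
    induction N with
    | zero => simp
    | succ N ih =>
      calc ∑ n ∈ Finset.range (N + 1), y (n + 1) + z (N + 1)
          = ∑ n ∈ Finset.range N, y (n + 1) + (y (N + 1) + z (N + 1)) := by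
            rw [Finset.sum_range_succ, add_assoc]
        _ ≤ ∑ n ∈ Finset.range N, y (n + 1) + z N := by gcongr; exact h N
        _ ≤ z 0 := ih
  exact ENNReal.tsum_le_of_sum_range_le fun N => le_self_add.trans (partial_le N)

lemma tsum_natCast_mul_eq_tsum_tsum (y : ℕ → ℝ≥0∞) :
    ∑' n : ℕ, (n : ℝ≥0∞) * y n = ∑' k, ∑' j, y (k + (j + 1)) := by
  have count : ∀ n : ℕ, (n : ℝ≥0∞) * y n = ∑' k, if k < n then y n else 0 := fun n => by
    rw [tsum_eq_sum (s := Finset.range n) fun k hk => if_neg (by simpa using hk),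
      Finset.sum_ite_of_true fun k hk => Finset.mem_range.1 hk]
    simp
  have tail : ∀ k, ∑' n, (if k < n then y n else 0) = ∑' j, y (k + (j + 1)) := fun k => by
    rw [← ENNReal.summable.sum_add_tsum_nat_add' (k := k + 1),
      Finset.sum_eq_zero fun i hi => if_neg (by simp at hi; omega), zero_add]
    exact tsum_congr fun j => by rw [if_pos (by omega)]; congr 1; omega
  simp_rw [count]
  rw [ENNReal.tsum_comm]
  exact tsum_congr tail

lemma tsum_natCast_mul_le_tsum_of_add_le {y z : ℕ → ℝ≥0∞}
    (h : ∀ n, y (n + 1) + z (n + 1) ≤ z n) : ∑' n : ℕ, (n : ℝ≥0∞) * y n ≤ ∑' n, z n := by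
  rw [tsum_natCast_mul_eq_tsum_tsum]
  exact ENNReal.tsum_le_tsum fun k =>
    tsum_succ_le_of_add_le (y := fun n => y (k + n)) (z := fun n => z (k + n)) fun n => h (k + n)

lemma tsum_two_mul_add_one_mul_div_tsum_sub_one_le {x z : ℕ → ℝ≥0∞} {c G : ℝ≥0∞}
    (hxz : ∀ n, x (n + 1) + z (n + 1) ≤ z n) (hcz : c * ∑' n, z n ≤ G)
    (hcx : 1 ≤ c * ∑' n, x n) :
    (∑' n : ℕ, (2 * n + 1) * x n) / ∑' n, x n - 1 ≤ 2 * G := by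
  set S := ∑' n, x n
  have hcS : c ≠ 0 ∧ S ≠ 0 := mul_ne_zero_iff.1 (one_pos.trans_le hcx).ne'
  have hS_inv : S⁻¹ ≤ c :=
    (ENNReal.inv_le_iff_le_mul (fun _ => hcS.2) fun _ => hcS.1).2 (mul_comm c S ▸ hcx)
  have split : ∑' n : ℕ, (2 * n + 1) * x n = 2 * ∑' n : ℕ, (n : ℝ≥0∞) * x n + S := by
    simp only [add_mul, one_mul, mul_assoc]
    rw [ENNReal.tsum_add, ENNReal.tsum_mul_left]
  rw [split, ENNReal.add_div, mul_div_assoc, tsub_le_iff_right]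
  calc 2 * ((∑' n : ℕ, (n : ℝ≥0∞) * x n) / S) + S / S
      ≤ 2 * ((∑' n : ℕ, (n : ℝ≥0∞) * x n) * c) + 1 := by
        gcongr
        · exact mul_le_mul_right hS_inv _
        · exact ENNReal.div_self_le_one
    _ ≤ 2 * G + 1 := by
        gcongr
        calc (∑' n : ℕ, (n : ℝ≥0∞) * x n) * c ≤ c * ∑' n, z n := by
              rw [mul_comm]; exact mul_le_mul_right (tsum_natCast_mul_le_tsum_of_add_le hxz) c
          _ ≤ G := hcz

end ENNReal

lemma Finset.sum_range_two_mul_add_one {S : Type*} [CommSemiring S] (n : ℕ) :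
    ∑ i ∈ Finset.range n, (2 * (i : S) + 1) = (n : S) ^ 2 := by
  induction n with
  | zero => simp
  | succ n ih =>
    rw [Finset.sum_range_succ, ih]
    push_cast
    ring

section Counting

variable {Ω : Type*} {mΩ : MeasurableSpace Ω} {μ : Measure Ω}

lemma lintegral_sum_range_eq_tsum {τ : Ω → ℕ} {A : ℕ → Set Ω} (hA : ∀ n, MeasurableSet (A n))
    (hτ : ∀ᵐ ω ∂μ, ∀ n, ω ∈ A n ↔ n < τ ω) (f : ℕ → ℝ≥0∞) :
    ∫⁻ ω, ∑ n ∈ Finset.range (τ ω), f n ∂μ = ∑' n, f n * μ (A n) := by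
  have sum_eq : ∀ᵐ ω ∂μ,
      ∑ n ∈ Finset.range (τ ω), f n = ∑' n, (A n).indicator (fun _ => f n) ω := by
    filter_upwards [hτ] with ω hω
    rw [tsum_eq_sum (s := Finset.range (τ ω)) fun n hn =>
      indicator_of_notMem (by simpa [hω n] using hn) _]
    exact Finset.sum_congr rfl fun n hn =>
      (indicator_of_mem ((hω n).2 (Finset.mem_range.1 hn)) fun _ => f n).symm
  rw [lintegral_congr_ae sum_eq,
    lintegral_tsum fun n => (measurable_const.indicator (hA n)).aemeasurable]
  exact tsum_congr fun n => lintegral_indicator_const (hA n) _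

lemma setLIntegral_eq_lintegral_mul_of_measure_inter {m : MeasurableSpace Ω} (hm : m ≤ mΩ)
    {C : Set Ω} {g : Ω → ℝ≥0∞} (hg : Measurable[mΩ] g)
    (h : ∀ B, MeasurableSet[m] B → μ (B ∩ C) = ∫⁻ ω in B, g ω ∂μ)
    {φ : Ω → ℝ≥0∞} (hφ : Measurable[m] φ) :
    ∫⁻ ω in C, φ ω ∂μ = ∫⁻ ω, φ ω * g ω ∂μ := by
  have trim_eq : (μ.restrict C).trim hm = (μ.withDensity g).trim hm := by
    refine Measure.ext fun s hs => ?_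
    rw [trim_measurableSet_eq hm hs, trim_measurableSet_eq hm hs,
      Measure.restrict_apply (hm s hs), withDensity_apply g (hm s hs)]
    exact h s hs
  calc ∫⁻ ω in C, φ ω ∂μ = ∫⁻ ω, φ ω ∂((μ.withDensity g).trim hm) := by
        rw [← trim_eq, lintegral_trim hm hφ]
    _ = ∫⁻ ω, g ω * φ ω ∂μ := by
        rw [lintegral_trim hm hφ, lintegral_withDensity_eq_lintegral_mul μ hg (hφ.mono hm le_rfl)]
        rfl
    _ = ∫⁻ ω, φ ω * g ω ∂μ := by simp_rw [mul_comm]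

end Counting

section ResidualKernel

open Filter Topology

variable {𝒳 : Type*} [MeasurableSpace 𝒳]

lemma MeasureTheory.Measure.sub_smul_apply {m ν : Measure 𝒳} [IsFiniteMeasure m] {c : ℝ≥0∞}
    (h : c • ν ≤ m) {A : Set 𝒳} (hA : MeasurableSet A) : (m - c • ν) A = m A - c * ν A := by
  have := isFiniteMeasure_of_le m h
  rw [Measure.sub_apply hA h, Measure.smul_apply, smul_eq_mul]

noncomputable def residualKernel (P : Kernel 𝒳 𝒳) [IsFiniteKernel P] (ν : Measure 𝒳)
    (b : 𝒳 → ℝ≥0∞) (hb : Measurable b) (hle : ∀ x, b x • ν ≤ P x) : Kernel 𝒳 𝒳 where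
  toFun x := P x - b x • ν
  measurable' := by
    refine Measure.measurable_of_measurable_coe _ fun A hA => ?_
    simp_rw [Measure.sub_smul_apply (hle _) hA]
    exact (P.measurable_coe hA).sub (hb.mul_const _)

@[simp]
lemma MeasureTheory.Measure.one_comp (m : Measure 𝒳) : (1 : Kernel 𝒳 𝒳) ∘ₘ m = m :=
  Measure.id_comp

lemma ProbabilityTheory.Kernel.pow_succ_comp (κ : Kernel 𝒳 𝒳) (n : ℕ) (m : Measure 𝒳) :
    (κ ^ (n + 1)) ∘ₘ m = κ ∘ₘ ((κ ^ n) ∘ₘ m) := by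
  rw [pow_succ', Measure.comp_assoc]
  rfl

variable {P : Kernel 𝒳 𝒳} [IsFiniteKernel P] {ν : Measure 𝒳} {b : 𝒳 → ℝ≥0∞}
  {hb : Measurable b} {hle : ∀ x, b x • ν ≤ P x}

lemma residualKernel_apply (x : 𝒳) : residualKernel P ν b hb hle x = P x - b x • ν := rfl

lemma residualKernel_add_smul (x : 𝒳) : residualKernel P ν b hb hle x + b x • ν = P x := by
  have := isFiniteMeasure_of_le (P x) (hle x)
  exact Measure.sub_add_cancel_of_le (hle x)

lemma lintegral_residualKernel_add (x : 𝒳) (f : 𝒳 → ℝ≥0∞) :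
    ∫⁻ y, f y ∂(residualKernel P ν b hb hle x) + b x * ∫⁻ y, f y ∂ν = ∫⁻ y, f y ∂(P x) := by
  rw [← smul_eq_mul, ← lintegral_smul_measure, ← lintegral_add_measure, residualKernel_add_smul]

lemma comp_eq_residualKernel_comp_add (m : Measure 𝒳) :
    P ∘ₘ m = residualKernel P ν b hb hle ∘ₘ m + (∫⁻ x, b x ∂m) • ν := by
  ext A hA
  rw [Measure.add_apply, Measure.smul_apply, smul_eq_mul,
    Measure.bind_apply hA P.aemeasurable,
    Measure.bind_apply hA (residualKernel P ν b hb hle).aemeasurable,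
    ← lintegral_mul_const _ hb,
    ← lintegral_add_left ((residualKernel P ν b hb hle).measurable_coe hA)]
  refine lintegral_congr fun x => ?_
  rw [← residualKernel_add_smul (hb := hb) (hle := hle) x, Measure.add_apply,
    Measure.smul_apply, smul_eq_mul]

lemma eq_residualKernel_pow_comp_add_sum {π : Measure 𝒳} (hinv : P.Invariant π) (N : ℕ) :
    π = (residualKernel P ν b hb hle ^ N) ∘ₘ π +
      (∫⁻ x, b x ∂π) • ∑ k ∈ Finset.range N, (residualKernel P ν b hb hle ^ k) ∘ₘ ν := by
  set R := residualKernel P ν b hb hle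
  induction N with
  | zero => simp
  | succ N ih =>
    have step : (R ^ N) ∘ₘ π = (R ^ (N + 1)) ∘ₘ π + (∫⁻ x, b x ∂π) • (R ^ N) ∘ₘ ν := by
      conv_lhs => rw [← hinv.def, comp_eq_residualKernel_comp_add (hb := hb) (hle := hle)]
      rw [Measure.comp_add, Measure.comp_smul, Measure.comp_assoc, pow_succ]
      rfl
    conv_lhs => rw [ih, step]
    rw [Finset.sum_range_succ, smul_add]
    abel

lemma ProbabilityTheory.Kernel.pow_succ_comp_univ_add_lintegral_le (κ : Kernel 𝒳 𝒳)
    (m : Measure 𝒳) {g : 𝒳 → ℝ≥0∞} (hg : Measurable g)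
    (hsup : ∀ x, ∫⁻ y, 1 + g y ∂(κ x) ≤ g x) (n : ℕ) :
    ((κ ^ (n + 1)) ∘ₘ m) univ + ∫⁻ y, g y ∂((κ ^ (n + 1)) ∘ₘ m) ≤
      ∫⁻ y, g y ∂((κ ^ n) ∘ₘ m) := by
  rw [← lintegral_one, ← lintegral_add_left measurable_const, κ.pow_succ_comp]
  exact (Measure.lintegral_bind κ.aemeasurable (measurable_const.add hg).aemeasurable).trans_le
    (lintegral_mono hsup)

lemma lintegral_mul_tsum_le_of_invariant {π : Measure 𝒳} (hinv : P.Invariant π)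
    (f : 𝒳 → ℝ≥0∞) :
    (∫⁻ x, b x ∂π) * ∑' k : ℕ, ∫⁻ y, f y ∂((residualKernel P ν b hb hle ^ k) ∘ₘ ν) ≤
      ∫⁻ y, f y ∂π := by
  rw [← ENNReal.tsum_mul_left]
  refine ENNReal.tsum_le_of_sum_range_le fun N => ?_
  conv_rhs => rw [eq_residualKernel_pow_comp_add_sum (hb := hb) (hle := hle) hinv N]
  rw [lintegral_add_measure, lintegral_smul_measure, lintegral_finsetSum_measure, smul_eq_mul,
    Finset.mul_sum]
  exact le_add_self

lemma one_le_lintegral_mul_tsum_of_invariant {π : Measure 𝒳} [IsProbabilityMeasure π]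
    (hinv : P.Invariant π) {g : 𝒳 → ℝ≥0∞} (hg : Measurable g)
    (hsup : ∀ x, ∫⁻ y, 1 + g y ∂(residualKernel P ν b hb hle x) ≤ g x)
    (hπg : ∫⁻ y, g y ∂π ≠ ∞) :
    1 ≤ (∫⁻ x, b x ∂π) * ∑' k : ℕ, ((residualKernel P ν b hb hle ^ k) ∘ₘ ν) univ := by
  set R := residualKernel P ν b hb hle
  have summable : ∑' n : ℕ, ((R ^ (n + 1)) ∘ₘ π) univ ≠ ∞ := by
    refine ne_top_of_le_ne_top hπg ?_
    simpa using ENNReal.tsum_succ_le_of_add_le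
      (y := fun n : ℕ => ((R ^ n) ∘ₘ π) univ) (z := fun n : ℕ => ∫⁻ y, g y ∂((R ^ n) ∘ₘ π))
      (R.pow_succ_comp_univ_add_lintegral_le π hg hsup)
  have vanish : Tendsto (fun N : ℕ => ((R ^ N) ∘ₘ π) univ) atTop (𝓝 0) :=
    (tendsto_add_atTop_iff_nat 1).1 (ENNReal.tendsto_atTop_zero_of_tsum_ne_top summable)
  set S := ∑' k : ℕ, ((R ^ k) ∘ₘ ν) univ
  refine ge_of_tendsto' (by simpa using vanish.add_const ((∫⁻ x, b x ∂π) * S)) fun N => ?_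
  calc 1 = π univ := measure_univ.symm
    _ = ((R ^ N) ∘ₘ π) univ + (∫⁻ x, b x ∂π) * ∑ k ∈ Finset.range N, ((R ^ k) ∘ₘ ν) univ := by
        conv_lhs => rw [eq_residualKernel_pow_comp_add_sum (hb := hb) (hle := hle) hinv N]
        rw [Measure.add_apply, Measure.smul_apply, Measure.finsetSum_apply, smul_eq_mul]
    _ ≤ ((R ^ N) ∘ₘ π) univ + (∫⁻ x, b x ∂π) * S := by
        gcongr
        exact ENNReal.sum_le_tsum _

end ResidualKernel

section SplitChain

variable {Ω 𝒳 : Type*} {mΩ : MeasurableSpace Ω} [MeasurableSpace 𝒳]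
  {X : ℕ → Ω → 𝒳} {G : ℕ → Ω → Bool}

lemma pastBeforeG_le (hX : ∀ n, Measurable (X n)) (hG : ∀ n, Measurable (G n)) (n : ℕ) :
    pastBeforeG X G n ≤ mΩ :=
  sup_le (iSup₂_le fun i _ => (hX i).comap_le) (iSup₂_le fun i _ => (hG i).comap_le)

lemma pastBeforeG_le_pastXG (n : ℕ) : pastBeforeG X G n ≤ pastXG X G n :=
  sup_le_sup le_rfl (iSup₂_mono' fun i hi => ⟨i, Iio_subset_Iic_self hi, le_rfl⟩)

lemma measurable_X_pastBeforeG (n : ℕ) : Measurable[pastBeforeG X G n] (X n) :=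
  Measurable.of_comap_le <| le_sup_of_le_left <|
    le_iSup₂ (f := fun i (_ : i ∈ Iic n) => MeasurableSpace.comap (X i) inferInstance) n
      (mem_Iic.2 le_rfl)

lemma measurable_G_pastBeforeG {i n : ℕ} (hi : i < n) : Measurable[pastBeforeG X G n] (G i) :=
  Measurable.of_comap_le <| le_sup_of_le_right <|
    le_iSup₂ (f := fun i (_ : i ∈ Iio n) => MeasurableSpace.comap (G i) inferInstance) i hi

lemma measurable_G_pastXG (n : ℕ) : Measurable[pastXG X G n] (G n) :=
  Measurable.of_comap_le <| le_sup_of_le_right <|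
    le_iSup₂ (f := fun i (_ : i ∈ Iic n) => MeasurableSpace.comap (G i) inferInstance) n
      (mem_Iic.2 le_rfl)

def noRegenBefore (G : ℕ → Ω → Bool) (n : ℕ) : Set Ω := {ω | ∀ i < n, G i ω = false}

lemma noRegenBefore_zero : noRegenBefore G 0 = univ := by
  simp [noRegenBefore]

lemma noRegenBefore_succ (n : ℕ) :
    noRegenBefore G (n + 1) = noRegenBefore G n ∩ {ω | G n ω = false} := by
  ext ω
  simp only [noRegenBefore, mem_inter_iff, mem_ofPred_eq, Nat.lt_succ_iff_lt_or_eq, or_imp,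
    forall_and, forall_eq]

lemma measurableSet_noRegenBefore (n : ℕ) :
    MeasurableSet[pastBeforeG X G n] (noRegenBefore G n) := by
  have : noRegenBefore G n = ⋂ i < n, G i ⁻¹' {false} := by
    ext ω; simp [noRegenBefore]
  rw [this]
  exact .biInter (to_countable _) fun i hi => measurable_G_pastBeforeG hi (.singleton false)

lemma lt_regTime_one_iff {ω : Ω} (hω : ∃ k, 0 < k ∧ G (k - 1) ω = true) (n : ℕ) :
    n < regTime G 1 ω ↔ ω ∈ noRegenBefore G n := by
  change n + 1 ≤ sInf {k | 0 < k ∧ G (k - 1) ω = true} ↔ _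
  rw [le_csInf_iff'' (show {k | 0 < k ∧ G (k - 1) ω = true}.Nonempty from hω)]
  constructor
  · intro h i hi
    by_contra hGi
    have := h (i + 1) ⟨i.succ_pos, by simpa using hGi⟩
    omega
  · rintro h k ⟨hk, hGk⟩
    by_contra hkn
    rw [h (k - 1) (by omega)] at hGk
    exact Bool.false_ne_true hGk

end SplitChain

section Regeneration

variable {Ω 𝒳 : Type*} {mΩ : MeasurableSpace Ω} [MeasurableSpace 𝒳]

-- Spelled as in `IsSplitChain.condG` and `residualKer`, which therefore unfold to it.
noncomputable def regenProb (J : Set 𝒳) (β : ℝ) (x : 𝒳) : ℝ≥0∞ :=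
  ENNReal.ofReal β * J.indicator (fun _ => (1 : ℝ≥0∞)) x

variable {μ : Measure Ω} {P : Kernel 𝒳 𝒳} {J : Set 𝒳} {β : ℝ} {ν : Measure 𝒳}
  {X : ℕ → Ω → 𝒳} {G : ℕ → Ω → Bool}

lemma measurable_regenProb (hJ : MeasurableSet J) : Measurable (regenProb J β) :=
  measurable_const.mul (measurable_const.indicator hJ)

lemma measurable_residualKer (hJ : MeasurableSet J) {A : Set 𝒳} (hA : MeasurableSet A) :
    Measurable fun x => residualKer P J β ν x A :=
  ((P.measurable_coe hA).sub ((measurable_regenProb hJ).mul_const _)).div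
    (measurable_const.sub (measurable_regenProb hJ))

variable [IsMarkovKernel P] (hJ : MeasurableSet J) (hle : ∀ x, regenProb J β x • ν ≤ P x)

local notation "R" => residualKernel P ν (regenProb J β) (measurable_regenProb hJ) hle

include hle in
lemma regenProb_le_one [IsProbabilityMeasure ν] (x : 𝒳) : regenProb J β x ≤ 1 := by
  simpa using hle x univ

lemma one_sub_regenProb_mul_residualKer [IsProbabilityMeasure ν] (x : 𝒳) {A : Set 𝒳}
    (hA : MeasurableSet A) : (1 - regenProb J β x) * residualKer P J β ν x A = R x A := by
  by_cases h0 : 1 - regenProb J β x = 0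
  -- `residualKer` divides by zero here, while `R x` is the zero measure.
  · have : (P x - regenProb J β x • ν) univ = 0 := by
      rw [Measure.sub_smul_apply (hle x) .univ]
      simpa using h0
    rw [h0, zero_mul, residualKernel_apply, measure_mono_null (subset_univ A) this]
  · rw [residualKernel_apply, Measure.sub_smul_apply (hle x) hA]
    exact ENNReal.mul_div_cancel h0 (ne_top_of_le_ne_top one_ne_top tsub_le_self)

include hJ hle in
lemma setLIntegral_regen_false [IsFiniteMeasure μ] [IsProbabilityMeasure ν]
    (hc : IsSplitChain μ P J β ν X G) (n : ℕ) {φ : Ω → ℝ≥0∞}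
    (hφ : Measurable[pastBeforeG X G n] φ) :
    ∫⁻ ω in {ω | G n ω = false}, φ ω ∂μ = ∫⁻ ω, φ ω * (1 - regenProb J β (X n ω)) ∂μ := by
  have hb : Measurable fun ω => regenProb J β (X n ω) :=
    (measurable_regenProb hJ).comp (hc.measX n)
  refine setLIntegral_eq_lintegral_mul_of_measure_inter (pastBeforeG_le hc.measX hc.measG n)
    (g := fun ω => 1 - regenProb J β (X n ω)) (measurable_const.sub hb) (fun B hB => ?_) hφ
  have hT : MeasurableSet {ω | G n ω = true} := hc.measG n (.singleton true)
  have split : μ (B ∩ {ω | G n ω = false}) + μ (B ∩ {ω | G n ω = true}) = μ B := by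
    rw [add_comm, ← measure_inter_add_sdiff B hT]
    congr 2
    ext ω
    simp
  have hfin : ∫⁻ ω in B, regenProb J β (X n ω) ∂μ ≠ ∞ :=
    ne_top_of_le_ne_top (measure_ne_top μ B)
      ((lintegral_mono fun ω => regenProb_le_one hle (X n ω)).trans_eq (setLIntegral_one B))
  rw [ENNReal.eq_sub_of_add_eq (measure_ne_top μ _) split, hc.condG n B hB, ← setLIntegral_one B]
  exact (lintegral_sub hb hfin (.of_forall fun ω => regenProb_le_one hle (X n ω))).symm

lemma measure_noRegenBefore_succ_inter [IsFiniteMeasure μ] [IsProbabilityMeasure ν]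
    (hc : IsSplitChain μ P J β ν X G) (n : ℕ) {A : Set 𝒳} (hA : MeasurableSet A) :
    μ (noRegenBefore G (n + 1) ∩ X (n + 1) ⁻¹' A) =
      ∫⁻ ω in noRegenBefore G n, R (X n ω) A ∂μ := by
  set F := {ω | G n ω = false}
  set Q := fun ω => residualKer P J β ν (X n ω) A
  have hAn : MeasurableSet (noRegenBefore G n) :=
    pastBeforeG_le hc.measX hc.measG n _ (measurableSet_noRegenBefore n)
  have hQ : Measurable[pastBeforeG X G n] ((noRegenBefore G n).indicator Q) :=
    ((measurable_residualKer hJ hA).comp (measurable_X_pastBeforeG n)).indicator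
      (measurableSet_noRegenBefore n)
  have hB : MeasurableSet[pastXG X G n] (noRegenBefore G n ∩ F) :=
    (pastBeforeG_le_pastXG n _ (measurableSet_noRegenBefore n)).inter
      (measurable_G_pastXG n (.singleton false))
  have hBm : MeasurableSet (noRegenBefore G n ∩ F) := hAn.inter (hc.measG n (.singleton false))
  calc μ (noRegenBefore G (n + 1) ∩ X (n + 1) ⁻¹' A)
      = ∫⁻ ω in noRegenBefore G n ∩ F, Q ω ∂μ := by
        rw [noRegenBefore_succ, hc.condX n A hA _ hB]
        refine setLIntegral_congr_fun hBm fun ω hω => ?_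
        have hG : G n ω = false := hω.2
        simp [hG, Q]
    _ = ∫⁻ ω in F, (noRegenBefore G n).indicator Q ω ∂μ := by
        rw [lintegral_indicator hAn, Measure.restrict_restrict hAn]
    _ = ∫⁻ ω, (noRegenBefore G n).indicator Q ω * (1 - regenProb J β (X n ω)) ∂μ :=
        setLIntegral_regen_false hJ hle hc n hQ
    _ = ∫⁻ ω in noRegenBefore G n, R (X n ω) A ∂μ := by
        rw [← lintegral_indicator hAn]
        refine lintegral_congr fun ω => ?_
        by_cases hω : ω ∈ noRegenBefore G n
        · rw [indicator_of_mem hω, indicator_of_mem hω, mul_comm,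
            one_sub_regenProb_mul_residualKer hJ hle _ hA]
        · simp [indicator_of_notMem hω]

lemma map_restrict_noRegenBefore [IsFiniteMeasure μ] [IsProbabilityMeasure ν]
    (hc : IsSplitChain μ P J β ν X G) (hX0 : μ.map (X 0) = ν) (n : ℕ) :
    (μ.restrict (noRegenBefore G n)).map (X n) = (R ^ n) ∘ₘ ν := by
  induction n with
  | zero => simp [noRegenBefore_zero, hX0]
  | succ n ih =>
    ext A hA
    rw [Measure.map_apply (hc.measX _) hA, Measure.restrict_apply (hc.measX _ hA), inter_comm,
      measure_noRegenBefore_succ_inter hJ hle hc n hA, Kernel.pow_succ_comp,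
      Measure.bind_apply hA (Kernel.aemeasurable _), ← ih,
      lintegral_map (Kernel.measurable_coe _ hA) (hc.measX n)]

lemma lintegral_sum_range_regTime_one [IsFiniteMeasure μ] [IsProbabilityMeasure ν]
    (hc : IsSplitChain μ P J β ν X G) (hX0 : μ.map (X 0) = ν) (f : ℕ → ℝ≥0∞) :
    ∫⁻ ω, ∑ n ∈ Finset.range (regTime G 1 ω), f n ∂μ = ∑' n, f n * ((R ^ n) ∘ₘ ν) univ := by
  rw [lintegral_sum_range_eq_tsum
    (fun n => pastBeforeG_le hc.measX hc.measG n _ (measurableSet_noRegenBefore n))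
    (hc.recur.mono fun ω hω n => (lt_regTime_one_iff (hω 0) n).symm)]
  refine tsum_congr fun n => ?_
  rw [← map_restrict_noRegenBefore hJ hle hc hX0 n, Measure.map_apply (hc.measX n) .univ,
    preimage_univ, Measure.restrict_apply_univ]

lemma lintegral_regTime_one [IsFiniteMeasure μ] [IsProbabilityMeasure ν]
    (hc : IsSplitChain μ P J β ν X G) (hX0 : μ.map (X 0) = ν) :
    ∫⁻ ω, (regTime G 1 ω : ℝ≥0∞) ∂μ = ∑' n : ℕ, ((R ^ n) ∘ₘ ν) univ := by
  simpa using lintegral_sum_range_regTime_one hJ hle hc hX0 fun _ => 1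

lemma lintegral_regTime_one_sq [IsFiniteMeasure μ] [IsProbabilityMeasure ν]
    (hc : IsSplitChain μ P J β ν X G) (hX0 : μ.map (X 0) = ν) :
    ∫⁻ ω, (regTime G 1 ω : ℝ≥0∞) ^ 2 ∂μ = ∑' n : ℕ, (2 * n + 1) * ((R ^ n) ∘ₘ ν) univ := by
  simpa [Finset.sum_range_two_mul_add_one] using
    lintegral_sum_range_regTime_one hJ hle hc hX0 fun n => 2 * n + 1

end Regeneration

section Drift

variable {𝒳 : Type*} [MeasurableSpace 𝒳] {V : 𝒳 → ℝ} {α γ : ℝ}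

lemma ENNReal.ofReal_mul_sub_one_add {t : ℝ} (hα : 0 ≤ α) (hγ : 0 ≤ γ) (ht : 1 ≤ t) :
    ENNReal.ofReal α * (ENNReal.ofReal t - 1) + ENNReal.ofReal γ =
      ENNReal.ofReal (α * (t - 1) + γ) := by
  rw [ENNReal.ofReal_add (mul_nonneg hα (by linarith)) hγ, ENNReal.ofReal_mul hα,
    ENNReal.ofReal_sub _ zero_le_one, ENNReal.ofReal_one]

lemma driftConstant_nonneg {l K β : ℝ} (hl1 : l < 1) (hβ0 : 0 < β) (hβ1 : β ≤ 1) (hK1 : 1 ≤ K) :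
    0 ≤ (K - l) / (β * (1 - l)) - 1 := by
  rw [sub_nonneg, le_div_iff₀ (mul_pos hβ0 (sub_pos.2 hl1))]
  nlinarith

noncomputable def driftBound (V : 𝒳 → ℝ) (α γ : ℝ) (x : 𝒳) : ℝ≥0∞ :=
  ENNReal.ofReal α * (ENNReal.ofReal (V x) - 1) + ENNReal.ofReal γ

lemma measurable_driftBound (hV : Measurable V) : Measurable (driftBound V α γ) :=
  (measurable_const.mul (hV.ennreal_ofReal.sub_const 1)).add measurable_const

lemma lintegral_driftBound (m : Measure 𝒳) [IsProbabilityMeasure m] (hV : Measurable V)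
    (hV1 : ∀ x, 1 ≤ V x) :
    ∫⁻ x, driftBound V α γ x ∂m =
      ENNReal.ofReal α * (∫⁻ x, ENNReal.ofReal (V x) ∂m - 1) + ENNReal.ofReal γ := by
  unfold driftBound
  rw [lintegral_add_right _ measurable_const, lintegral_const_mul _ (hV.ennreal_ofReal.sub_const 1),
    lintegral_sub measurable_const (by simp) (.of_forall fun x => ENNReal.one_le_ofReal.2 (hV1 x))]
  simp

lemma one_le_of_lintegral_ofReal_le {m : Measure 𝒳} [IsProbabilityMeasure m]
    (hV1 : ∀ x, 1 ≤ V x) {t : ℝ} (h : ∫⁻ x, ENNReal.ofReal (V x) ∂m ≤ ENNReal.ofReal t) :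
    1 ≤ t := by
  refine ENNReal.one_le_ofReal.1 (le_trans ?_ h)
  simpa using lintegral_mono (μ := m) fun x => ENNReal.one_le_ofReal.2 (hV1 x)

lemma lintegral_driftBound_eq_ofReal (m : Measure 𝒳) [IsProbabilityMeasure m]
    (hV : Measurable V) (hV1 : ∀ x, 1 ≤ V x) (hVint : Integrable V m) (hα : 0 ≤ α)
    (hγ : 0 ≤ γ) :
    ∫⁻ x, driftBound V α γ x ∂m = ENNReal.ofReal (α * ((∫ x, V x ∂m) - 1) + γ) := by
  have hmV : ∫⁻ x, ENNReal.ofReal (V x) ∂m = ENNReal.ofReal (∫ x, V x ∂m) :=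
    (ofReal_integral_eq_lintegral_ofReal hVint (.of_forall fun x => zero_le_one.trans (hV1 x))).symm
  rw [lintegral_driftBound m hV hV1, hmV,
    ENNReal.ofReal_mul_sub_one_add hα hγ (one_le_of_lintegral_ofReal_le hV1 hmV.le)]

lemma lintegral_one_add_driftBound_le {m : Measure 𝒳} [IsProbabilityMeasure m]
    (hV : Measurable V) (hV1 : ∀ x, 1 ≤ V x) (hα : 0 ≤ α) (hγ : 0 ≤ γ) {t : ℝ}
    (h : ∫⁻ x, ENNReal.ofReal (V x) ∂m ≤ ENNReal.ofReal t) :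
    ∫⁻ x, 1 + driftBound V α γ x ∂m ≤ ENNReal.ofReal (1 + (α * (t - 1) + γ)) := by
  have ht := one_le_of_lintegral_ofReal_le hV1 h
  rw [lintegral_add_left measurable_const, lintegral_const, measure_univ, mul_one,
    lintegral_driftBound m hV hV1, ENNReal.ofReal_add zero_le_one (by nlinarith),
    ENNReal.ofReal_one, ← ENNReal.ofReal_mul_sub_one_add hα hγ ht]
  gcongr

end Drift

section Superharmonic

variable {𝒳 : Type*} [MeasurableSpace 𝒳] {P : Kernel 𝒳 𝒳} [IsMarkovKernel P]
  {J : Set 𝒳} {β : ℝ} {ν : Measure 𝒳} [IsProbabilityMeasure ν]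
  (hJ : MeasurableSet J) (hle : ∀ x, regenProb J β x • ν ≤ P x)

local notation "R" => residualKernel P ν (regenProb J β) (measurable_regenProb hJ) hle

-- `α` and `γ` solve `α (1 - l) = l`, which closes the bound off `J`, and
-- `β (1 + γ) = (K - l) / (1 - l)`, which closes it on `J`.
lemma lintegral_one_add_driftBound_residualKernel_le {V : 𝒳 → ℝ} {l K : ℝ}
    (hl0 : 0 < l) (hl1 : l < 1) (hβ0 : 0 < β) (hβ1 : β ≤ 1) (hK1 : 1 ≤ K)
    (hV : Measurable V) (hV1 : ∀ x, 1 ≤ V x)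
    (hoff : ∀ x ∉ J, ∫⁻ y, ENNReal.ofReal (V y) ∂(P x) ≤ ENNReal.ofReal (l * V x))
    (hon : ∀ x ∈ J, ∫⁻ y, ENNReal.ofReal (V y) ∂(P x) ≤ ENNReal.ofReal K) (x : 𝒳) :
    ∫⁻ y, 1 + driftBound V (l / (1 - l)) ((K - l) / (β * (1 - l)) - 1) y ∂(R x) ≤
      driftBound V (l / (1 - l)) ((K - l) / (β * (1 - l)) - 1) x := by
  set α := l / (1 - l)
  set γ := (K - l) / (β * (1 - l)) - 1
  have h1l : 0 < 1 - l := by linarith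
  have hα : 0 ≤ α := div_nonneg hl0.le h1l.le
  have hγ : 0 ≤ γ := driftConstant_nonneg hl1 hβ0 hβ1 hK1
  have hsplit := lintegral_residualKernel_add (hb := measurable_regenProb hJ) (hle := hle) x
    (fun y => 1 + driftBound V α γ y)
  by_cases hx : x ∈ J
  · have hbx : regenProb J β x = ENNReal.ofReal β := by simp [regenProb, hx]
    have hν : ENNReal.ofReal (β * (1 + γ)) ≤
        regenProb J β x * ∫⁻ y, 1 + driftBound V α γ y ∂ν := by
      rw [hbx, ENNReal.ofReal_mul hβ0.le, ENNReal.ofReal_add zero_le_one hγ, ENNReal.ofReal_one]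
      gcongr
      calc 1 + ENNReal.ofReal γ = ∫⁻ _, 1 + ENNReal.ofReal γ ∂ν := by simp
        _ ≤ ∫⁻ y, 1 + driftBound V α γ y ∂ν := lintegral_mono fun y => by
          gcongr
          exact le_add_self
    have hP := lintegral_one_add_driftBound_le hV hV1 hα hγ (hon x hx)
    calc ∫⁻ y, 1 + driftBound V α γ y ∂(R x)
        ≤ ENNReal.ofReal (1 + (α * (K - 1) + γ)) - ENNReal.ofReal (β * (1 + γ)) := by
          refine ENNReal.le_sub_of_add_le_right ENNReal.ofReal_ne_top
            (le_trans ?_ (hsplit.trans_le hP))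
          gcongr
      _ = ENNReal.ofReal (γ + (1 - K)) := by
          rw [← ENNReal.ofReal_sub _ (by positivity)]
          congr 1
          simp only [α, γ]
          field_simp
          ring
      _ ≤ driftBound V α γ x := (ENNReal.ofReal_le_ofReal (by linarith)).trans le_add_self
  · have hbx : regenProb J β x = 0 := by simp [regenProb, hx]
    rw [hbx, zero_mul, add_zero] at hsplit
    have hlV : 1 ≤ l * V x := one_le_of_lintegral_ofReal_le hV1 (hoff x hx)
    rw [hsplit]
    refine (lintegral_one_add_driftBound_le hV hV1 hα hγ (hoff x hx)).trans ?_
    rw [driftBound, ENNReal.ofReal_mul_sub_one_add hα hγ (hV1 x)]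
    refine ENNReal.ofReal_le_ofReal ?_
    have : α * (V x - 1) - α * (l * V x - 1) = l * V x := by
      simp only [α]
      field_simp
      ring
    linarith

end Superharmonic

/-- **Theorem 6.3 (i)**: under the small-set assumption and the one-step drift condition
`PV ≤ λV` off `J`, `PV ≤ K` on `J` (with `V ≥ 1`, `λ ∈ (0,1)`), with `π` invariant for `P`,
the constant `n₀ = E_ν τ₁²/E_ν τ₁ − 1` of the split chain started from `X 0 ∼ ν` satisfies
`n₀ ≤ 2 [λ(π(V) − 1)/(1 − λ) + (K − λ)/(β(1 − λ)) − 1]`. -/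
theorem drift_overshoot_constant_bound
    {Ω 𝒳 : Type*} [MeasurableSpace Ω] [MeasurableSpace 𝒳]
    (μ : Measure Ω) [IsProbabilityMeasure μ]
    (P : Kernel 𝒳 𝒳) [IsMarkovKernel P]
    (π ν : Measure 𝒳) [IsProbabilityMeasure π] [IsProbabilityMeasure ν]
    (hinv : Kernel.Invariant P π)
    (J : Set 𝒳) (hJmeas : MeasurableSet J) (hJpos : 0 < π J)
    (β : ℝ) (hβpos : 0 < β) (hβle : β ≤ 1)
    (hsmall : ∀ x, ∀ A : Set 𝒳, MeasurableSet A →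
      ENNReal.ofReal β * J.indicator (fun _ => (1 : ℝ≥0∞)) x * ν A ≤ P x A)
    (V : 𝒳 → ℝ) (hVmeas : Measurable V) (hV1 : ∀ x, 1 ≤ V x)
    (l K : ℝ) (hl0 : 0 < l) (hl1 : l < 1)
    (hdrift_off : ∀ x ∉ J, ∫⁻ y, ENNReal.ofReal (V y) ∂(P x) ≤ ENNReal.ofReal (l * V x))
    (hdrift_on : ∀ x ∈ J, ∫⁻ y, ENNReal.ofReal (V y) ∂(P x) ≤ ENNReal.ofReal K)
    (hVint : Integrable V π)
    (X : ℕ → Ω → 𝒳) (G : ℕ → Ω → Bool)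
    (hchain : IsSplitChain μ P J β ν X G)
    (hX0 : μ.map (X 0) = ν) :
    (∫⁻ ω, ((regTime G 1 ω : ℝ≥0∞)) ^ 2 ∂μ) / (∫⁻ ω, (regTime G 1 ω : ℝ≥0∞) ∂μ) - 1 ≤
      ENNReal.ofReal
        (2 * (l * ((∫ x, V x ∂π) - 1) / (1 - l) + (K - l) / (β * (1 - l)) - 1)) := by
  obtain ⟨x₀, hx₀⟩ := nonempty_of_measure_ne_zero hJpos.ne'
  have hle : ∀ x, regenProb J β x • ν ≤ P x := fun x => Measure.le_iff.2 (hsmall x)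
  have hK1 : 1 ≤ K := one_le_of_lintegral_ofReal_le hV1 (hdrift_on x₀ hx₀)
  set R := residualKernel P ν (regenProb J β) (measurable_regenProb hJmeas) hle
  set g := driftBound V (l / (1 - l)) ((K - l) / (β * (1 - l)) - 1)
  have hsup : ∀ x, ∫⁻ y, 1 + g y ∂(R x) ≤ g x :=
    lintegral_one_add_driftBound_residualKernel_le hJmeas hle hl0 hl1 hβpos hβle hK1 hVmeas hV1
      hdrift_off hdrift_on
  have hπg : ∫⁻ x, g x ∂π =
      ENNReal.ofReal (l / (1 - l) * ((∫ x, V x ∂π) - 1) + ((K - l) / (β * (1 - l)) - 1)) :=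
    lintegral_driftBound_eq_ofReal π hVmeas hV1 hVint (div_nonneg hl0.le (sub_pos.2 hl1).le)
      (driftConstant_nonneg hl1 hβpos hβle hK1)
  rw [lintegral_regTime_one hJmeas hle hchain hX0, lintegral_regTime_one_sq hJmeas hle hchain hX0]
  calc _ ≤ 2 * ∫⁻ x, g x ∂π :=
        ENNReal.tsum_two_mul_add_one_mul_div_tsum_sub_one_le
          (R.pow_succ_comp_univ_add_lintegral_le ν (measurable_driftBound hVmeas) hsup)
          (lintegral_mul_tsum_le_of_invariant hinv g)
          (one_le_lintegral_mul_tsum_of_invariant hinv (measurable_driftBound hVmeas) hsup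
            (hπg ▸ ENNReal.ofReal_ne_top))
    _ = _ := by
      rw [hπg, ← ENNReal.ofReal_ofNat 2, ← ENNReal.ofReal_mul zero_le_two]
      ring_nf
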